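/- arXiv:2401.04596 — 3 statements merged into one kernel-verified Lean document; each statement's English description precedes it below -/
import Mathlib

section
/- Let n > 3 be odd and let k ∈ {0,…,(n−1)/2}. If k is even then H_n(k) = 4[(R_n/cos²(θ_n/2)) cos(kθ_n) + (R_n/cos(θ_n/2)) sin(kθ_n) + R_n²(1 + r_n⁴)] − 2, and if k is odd then H_n(k) = 4[(R_n/cos²(θ_n/2)) cos(kθ_n) + (R_n/cos(θ_n/2)) sin(kθ_n) + 2R_n² r_n²] − 2. -/
noncomputable section

/-- Standard inner product on `ℝ³`. -/
def dot3 (v w : Fin 3 → ℝ) : ℝ := ∑ i, v i * w i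

/-- The angle `θ_n = π / n`. -/
def thetaN (n : ℕ) : ℝ := Real.pi / n

/-- `r_n = (cos θ_n)^{-1/2}`. -/
def rN (n : ℕ) : ℝ := Real.sqrt (Real.cos (thetaN n))⁻¹

/-- `R_n = 1 / (1 + r_n²)`. -/
def RN (n : ℕ) : ℝ := 1 / (1 + rN n ^ 2)

/-- The pure states `ω_n(i)` of the regular polygon theory. -/
def omegaN (n i : ℕ) : Fin 3 → ℝ :=
  ![rN n * Real.cos (2 * (i : ℝ) * thetaN n), rN n * Real.sin (2 * (i : ℝ) * thetaN n), 1]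

/-- The state space `Ω_n`, the convex hull of the pure states. -/
def OmegaN (n : ℕ) : Set (Fin 3 → ℝ) :=
  convexHull ℝ {v | ∃ i < n, v = omegaN n i}

/-- The unit effect `u = (0,0,1)`. -/
def uEff : Fin 3 → ℝ := ![0, 0, 1]

/-- The pure effects `e_n(i)` (separate formulas for even and odd `n`). -/
def eN (n i : ℕ) : Fin 3 → ℝ :=
  if Even n then
    (1 / 2 : ℝ) • ![rN n * Real.cos ((2 * (i : ℝ) + 1) * thetaN n),
                    rN n * Real.sin ((2 * (i : ℝ) + 1) * thetaN n), 1]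
  else
    RN n • ![rN n * Real.cos (2 * (i : ℝ) * thetaN n),
             rN n * Real.sin (2 * (i : ℝ) * thetaN n), 1]

/-- The complementary effect `ē_n(i) = u - e_n(i)`. -/
def eBarN (n i : ℕ) : Fin 3 → ℝ := uEff - eN n i

/-- The effect space `E_n`. -/
def EffN (n : ℕ) : Set (Fin 3 → ℝ) :=
  {f | ∀ ω ∈ OmegaN n, dot3 f ω ∈ Set.Icc (0 : ℝ) 1}

/-- The positive cone `V_{n+}` generated by the state space. -/
def VposN (n : ℕ) : Set (Fin 3 → ℝ) :=
  {x | ∃ c : ℝ, 0 ≤ c ∧ ∃ ω ∈ OmegaN n, x = c • ω}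

/-- The dual cone `V*_{n+}` generated by the effect space. -/
def VdualN (n : ℕ) : Set (Fin 3 → ℝ) :=
  {x | ∃ c : ℝ, 0 ≤ c ∧ ∃ f ∈ EffN n, x = c • f}

/-- A state of `Ω_n ⊗_max Ω_n`, identified with a normalized cone-preserving linear map. -/
def IsState (n : ℕ) (η : (Fin 3 → ℝ) →ₗ[ℝ] (Fin 3 → ℝ)) : Prop :=
  (∀ x ∈ VdualN n, η x ∈ VposN n) ∧ dot3 uEff (η uEff) = 1

/-- A binary observable on `Ω_n`: a pair of effects summing to the unit effect. -/
def IsObservable (n : ℕ) (A : (Fin 3 → ℝ) × (Fin 3 → ℝ)) : Prop :=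
  A.1 ∈ EffN n ∧ A.2 ∈ EffN n ∧ A.1 + A.2 = uEff

/-- The observable `E_n(i) = (e_n(i), ē_n(i))`. -/
def EObs (n i : ℕ) : (Fin 3 → ℝ) × (Fin 3 → ℝ) := (eN n i, eBarN n i)

/-- The correlator `E(st) = Σ_{a,b} (-1)^{a+b} ⟨B^b, η(A^a)⟩`. -/
def corr (η : (Fin 3 → ℝ) →ₗ[ℝ] (Fin 3 → ℝ)) (A B : (Fin 3 → ℝ) × (Fin 3 → ℝ)) : ℝ :=
  dot3 B.1 (η A.1) - dot3 B.2 (η A.1) - dot3 B.1 (η A.2) + dot3 B.2 (η A.2)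

/-- The CHSH value `C[η; A₀,A₁; B₀,B₁] = E(00) + E(01) + E(10) - E(11)`. -/
def CHSH (η : (Fin 3 → ℝ) →ₗ[ℝ] (Fin 3 → ℝ))
    (A0 A1 B0 B1 : (Fin 3 → ℝ) × (Fin 3 → ℝ)) : ℝ :=
  corr η A0 B0 + corr η A0 B1 + corr η A1 B0 - corr η A1 B1

/-- `GL(Ω_n)`: linear bijections of `ℝ³` preserving the state space. -/
def GLOmega (n : ℕ) : Set ((Fin 3 → ℝ) →ₗ[ℝ] (Fin 3 → ℝ)) :=
  {T | Function.Bijective T ∧ T '' OmegaN n = OmegaN n}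

/-- The order isomorphism `T_n`: a rotation by `θ_n` for even `n`, the identity for odd `n`. -/
def TN (n : ℕ) : (Fin 3 → ℝ) →ₗ[ℝ] (Fin 3 → ℝ) :=
  if Even n then
    Matrix.toLin' !![Real.cos (thetaN n), Real.sin (thetaN n), 0;
                     -Real.sin (thetaN n), Real.cos (thetaN n), 0;
                     0, 0, 1]
  else LinearMap.id

/-- Maximally entangled states: elements of `T_n · GL(Ω_n)`. -/
def MaxEnt (n : ℕ) (η : (Fin 3 → ℝ) →ₗ[ℝ] (Fin 3 → ℝ)) : Prop :=
  ∃ T ∈ GLOmega n, η = (TN n).comp T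

/-- The effects `Q_s^a` built from Bob's observables `B₀ = E_n(k)`, `B₁ = E_n(0)`:
`Q₀⁰ = ½(B₀⁰+B₁⁰)`, `Q₀¹ = ½(B₀¹+B₁¹)`, `Q₁⁰ = ½(B₀⁰+B₁¹)`, `Q₁¹ = ½(B₀¹+B₁⁰)`. -/
def QQ (n k : ℕ) : Fin 2 → Fin 2 → Fin 3 → ℝ :=
  ![![(1 / 2 : ℝ) • (eN n k + eN n 0), (1 / 2 : ℝ) • (eBarN n k + eBarN n 0)],
    ![(1 / 2 : ℝ) • (eN n k + eBarN n 0), (1 / 2 : ℝ) • (eBarN n k + eN n 0)]]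

/-- Assemblage pairs `{(p(a|s), ω_s^a)}` (first index `s`, second `a`). -/
def EnsAll (n : ℕ) : Set ((Fin 2 → Fin 2 → ℝ) × (Fin 2 → Fin 2 → Fin 3 → ℝ)) :=
  {pw | (∀ s a, 0 ≤ pw.1 s a) ∧ (∀ s, ∑ a, pw.1 s a = 1) ∧
        (∀ s a, pw.2 s a ∈ OmegaN n) ∧
        (∑ a, pw.1 0 a • pw.2 0 a) = (∑ a, pw.1 1 a • pw.2 1 a)}

/-- Assemblage pairs generated by maximally entangled states. -/
def EnsME (n : ℕ) : Set ((Fin 2 → Fin 2 → ℝ) × (Fin 2 → Fin 2 → Fin 3 → ℝ)) :=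
  {pw | pw ∈ EnsAll n ∧ ∃ η ∈ GLOmega n, ∃ i < n, ∃ j < n,
        η (eN n i) = pw.1 0 0 • pw.2 0 0 ∧ η (eBarN n i) = pw.1 0 1 • pw.2 0 1 ∧
        η (eN n j) = pw.1 1 0 • pw.2 1 0 ∧ η (eBarN n j) = pw.1 1 1 • pw.2 1 1}

/-- The CHSH value of an assemblage pair:
`C = 4(Σ_{s,a} p(a|s) ⟨Q_s^a, ω_s^a⟩ − 1)`. -/
def CEns (n k : ℕ) (pw : (Fin 2 → Fin 2 → ℝ) × (Fin 2 → Fin 2 → Fin 3 → ℝ)) : ℝ :=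
  4 * ((∑ s, ∑ a, pw.1 s a * dot3 (QQ n k s a) (pw.2 s a)) - 1)

/-- `G_n(k)`: the optimal CHSH value over all assemblage pairs. -/
def Gfun (n k : ℕ) : ℝ := sSup ((fun pw => |CEns n k pw|) '' EnsAll n)

/-- `H_n(k)`: the optimal CHSH value over assemblage pairs from maximally entangled
states. -/
def Hfun (n k : ℕ) : ℝ := sSup ((fun pw => |CEns n k pw|) '' EnsME n)

/-- `n⋆ = (n−1)/4` if `n ≡ 1, 5 (mod 8)` and `n⋆ = (n+1)/4` if `n ≡ 3, 7 (mod 8)`. -/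
def nStar (n : ℕ) : ℕ := if n % 8 = 1 ∨ n % 8 = 5 then (n - 1) / 4 else (n + 1) / 4

/-!
For odd `n` the effects are `e_n(i) = R_n ω_n(i)`. An element of `GL(Ω_n)` permutes the
vertices of the polygon, which are its extreme points, and hence fixes their barycentre `u`;
so a maximally entangled ensemble has the same products `p(a|s) ω_s^a` as the one built from
a pair of vertices `(i, j)`, and every pair is realised (with `ē_n(i)` a multiple of the
midpoint of the edge opposite to `ω_n(i)`). The CHSH value of the pair `(i, j)` is
`2 - c + c (cos kθ cos (2i - k)θ + sin kθ sin (2j - k)θ)` with `c = 8 R_n² r_n² ≤ 2`.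
The sine ranges over `[-cos (θ/2), cos (θ/2)]`. The cosine reaches `1` when `k` is even;
when `k` is odd, `2i - k` is odd, so the cosine stays below `cos θ` but reaches `-1`, and
the minimum of the value beats the maximum in absolute value.
-/

open Real

section ExposedVertex

variable {E : Type*} [AddCommGroup E] [Module ℝ E]

theorem convex_insert_halfSpace_lt (f : E →ₗ[ℝ] ℝ) (x : E) :
    Convex ℝ (insert x {y | f y < f x}) := by
  rw [convex_iff_forall_pos]
  rintro p hp q hq a b ha hb hab
  by_cases hpq : p = x ∧ q = x
  · left
    rw [hpq.1, hpq.2, ← add_smul, hab, one_smul]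
  · right
    have hle : ∀ z ∈ insert x {y | f y < f x}, f z ≤ f x := fun z hz =>
      hz.elim (fun h => h ▸ le_rfl) fun h => le_of_lt h
    have hlt : a * f p + b * f q < a * f x + b * f x := by
      rcases not_and_or.1 hpq with h | h
      · exact add_lt_add_of_lt_of_le (mul_lt_mul_of_pos_left (hp.resolve_left h) ha)
          (mul_le_mul_of_nonneg_left (hle q hq) hb.le)
      · exact add_lt_add_of_le_of_lt (mul_le_mul_of_nonneg_left (hle p hp) ha.le)
          (mul_lt_mul_of_pos_left (hq.resolve_left h) hb)
    simpa [← add_mul, hab] using hlt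

theorem mem_extremePoints_convexHull_of_lt {S : Set E} (f : E →ₗ[ℝ] ℝ) {x : E} (hx : x ∈ S)
    (hlt : ∀ y ∈ S, y ≠ x → f y < f x) : x ∈ (convexHull ℝ S).extremePoints ℝ := by
  have hhull : convexHull ℝ S ⊆ insert x {y | f y < f x} :=
    convexHull_min (fun y hy => or_iff_not_imp_left.2 (hlt y hy))
      (convex_insert_halfSpace_lt f x)
  refine mem_extremePoints.2
    ⟨subset_convexHull ℝ S hx, fun a ha b hb ⟨α, β, hα, hβ, hαβ, hab⟩ => ?_⟩
  have hsum : α * (f x - f a) + β * (f x - f b) = 0 := by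
    rw [← hab, map_add, map_smul, map_smul, smul_eq_mul, smul_eq_mul]
    linear_combination (α * f a + β * f b) * hαβ
  have hle : ∀ y ∈ convexHull ℝ S, f y ≤ f x := fun y hy =>
    (hhull hy).elim (fun h => h ▸ le_rfl) fun h => le_of_lt h
  have hfa := mul_nonneg hα.le (sub_nonneg.2 (hle a ha))
  have hfb := mul_nonneg hβ.le (sub_nonneg.2 (hle b hb))
  refine ⟨(hhull ha).resolve_right fun h => ?_, (hhull hb).resolve_right fun h => ?_⟩
  · linarith [mul_pos hα (sub_pos.2 h)]
  · linarith [mul_pos hβ (sub_pos.2 h)]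

end ExposedVertex

theorem cos_odd_mul_pi_div_le {N : ℕ} (hN : 0 < N) {q : ℤ} (hq : Odd q) :
    cos (q * (π / N)) ≤ cos (π / N) := by
  have hNr : (0 : ℝ) < N := by exact_mod_cast hN
  set m := round ((q : ℝ) / (2 * N))
  -- `q - 2 N m` is the representative of `q` modulo `2 N` closest to `0`
  have hle : |((q - 2 * N * m : ℤ) : ℝ)| ≤ N := by
    have h := abs_sub_round ((q : ℝ) / (2 * N))
    rw [show ((q - 2 * N * m : ℤ) : ℝ) = 2 * N * ((q : ℝ) / (2 * N) - m) by
      push_cast; field_simp, abs_mul, abs_of_pos (by positivity)]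
    nlinarith
  have hge : (1 : ℝ) ≤ |((q - 2 * N * m : ℤ) : ℝ)| := by
    have hodd : Odd (q - 2 * N * m) := hq.sub_even ⟨N * m, by ring⟩
    rw [← Int.cast_abs, ← Int.cast_one, Int.cast_le]
    exact Int.one_le_abs fun h => by simp [h] at hodd
  calc cos (q * (π / N))
      = cos (|((q - 2 * N * m : ℤ) : ℝ)| * (π / N)) := by
        rw [← abs_of_pos (by positivity : 0 < π / N), ← abs_mul, cos_abs, abs_of_pos
          (by positivity : 0 < π / N), ← cos_sub_int_mul_two_pi _ m]
        congr 1
        push_cast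
        field_simp
    _ ≤ cos (π / N) := by
        apply cos_le_cos_of_nonneg_of_le_pi (by positivity)
        · calc _ ≤ (N : ℝ) * (π / N) := by gcongr
            _ = π := by field_simp
        · nlinarith [pi_pos, div_pos pi_pos hNr]

section Parameters

variable {n k : ℕ}

theorem thetaN_pos (hn : 0 < n) : 0 < thetaN n :=
  div_pos pi_pos (by exact_mod_cast hn)

theorem natCast_mul_thetaN (hn : 0 < n) : (n : ℝ) * thetaN n = π := by
  rw [thetaN]
  field_simp

theorem thetaN_le_pi_div_three (hn : 2 < n) : thetaN n ≤ π / 3 :=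
  div_le_div_of_nonneg_left pi_pos.le (by norm_num) (by exact_mod_cast hn)

theorem cos_thetaN_pos (hn : 2 < n) : 0 < cos (thetaN n) :=
  cos_pos_of_mem_Ioo ⟨by linarith [thetaN_pos (n := n) (by omega), pi_pos],
    by linarith [thetaN_le_pi_div_three hn, pi_pos]⟩

theorem cos_thetaN_half_sq (n : ℕ) : cos (thetaN n / 2) ^ 2 = (1 + cos (thetaN n)) / 2 := by
  rw [cos_sq]
  ring_nf

theorem rN_sq (hn : 2 < n) : rN n ^ 2 = (cos (thetaN n))⁻¹ :=
  sq_sqrt (inv_nonneg.2 (cos_thetaN_pos hn).le)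

theorem rN_sq_mul_cos_thetaN (hn : 2 < n) : rN n ^ 2 * cos (thetaN n) = 1 := by
  rw [rN_sq hn, inv_mul_cancel₀ (cos_thetaN_pos hn).ne']

theorem RN_mul_one_add_rN_sq (n : ℕ) : RN n * (1 + rN n ^ 2) = 1 := by
  have : 0 < 1 + rN n ^ 2 := by positivity
  rw [RN]
  field_simp

theorem RN_eq (hn : 2 < n) : RN n = cos (thetaN n) / (1 + cos (thetaN n)) := by
  have := cos_thetaN_pos hn
  rw [RN, rN_sq hn]
  field_simp
  ring

theorem eight_mul_RN_sq_mul_rN_sq (hn : 2 < n) :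
    8 * RN n ^ 2 * rN n ^ 2 = 8 * cos (thetaN n) / (1 + cos (thetaN n)) ^ 2 := by
  have := cos_thetaN_pos hn
  rw [RN_eq hn, rN_sq hn]
  field_simp

theorem RN_div_cos_thetaN_half_sq (hn : 2 < n) :
    RN n / cos (thetaN n / 2) ^ 2 = 2 * RN n ^ 2 * rN n ^ 2 := by
  have := cos_thetaN_pos hn
  rw [cos_thetaN_half_sq, RN_eq hn, rN_sq hn]
  field_simp

theorem RN_div_cos_thetaN_half (hn : 2 < n) :
    RN n / cos (thetaN n / 2) = 2 * RN n ^ 2 * rN n ^ 2 * cos (thetaN n / 2) := by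
  have h : cos (thetaN n / 2) ^ 2 ≠ 0 := by
    have := cos_thetaN_pos hn
    rw [cos_thetaN_half_sq]
    positivity
  have h : cos (thetaN n / 2) ≠ 0 := (pow_ne_zero_iff two_ne_zero).1 h
  rw [← RN_div_cos_thetaN_half_sq hn]
  field_simp

theorem sin_thetaN_half_nonneg (hn : 0 < n) : 0 ≤ sin (thetaN n / 2) := by
  have hθ := thetaN_pos hn
  have : thetaN n ≤ π := div_le_self pi_pos.le (by exact_mod_cast hn)
  exact sin_nonneg_of_nonneg_of_le_pi (by positivity) (by linarith)

theorem sin_thetaN_half_le_cos (hk : 2 * k + 1 ≤ n) :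
    sin (thetaN n / 2) ≤ cos (k * thetaN n) := by
  have hθ := thetaN_pos (n := n) (by omega)
  have hkn : (2 * k + 1 : ℝ) * thetaN n ≤ π := by
    rw [← natCast_mul_thetaN (n := n) (by omega)]
    gcongr
    exact_mod_cast hk
  rw [← cos_pi_div_two_sub]
  apply cos_le_cos_of_nonneg_of_le_pi (by positivity) <;> nlinarith

theorem cos_natCast_mul_thetaN_nonneg (hk : 2 * k + 1 ≤ n) : 0 ≤ cos (k * thetaN n) :=
  (sin_thetaN_half_nonneg (by omega)).trans (sin_thetaN_half_le_cos hk)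

theorem sin_natCast_mul_thetaN_nonneg (hk : k ≤ n) : 0 ≤ sin (k * thetaN n) := by
  rcases Nat.eq_zero_or_pos n with rfl | hn
  · simp [thetaN]
  apply sin_nonneg_of_nonneg_of_le_pi (by have := thetaN_pos hn; positivity)
  rw [← natCast_mul_thetaN hn]
  have := thetaN_pos hn
  gcongr

theorem one_sub_cos_thetaN_le (hn : 2 < n) (hk : 2 * k + 1 ≤ n) :
    1 - cos (thetaN n) ≤ 2 * cos (thetaN n) * cos (k * thetaN n) := by
  have hs₀ := sin_thetaN_half_nonneg (n := n) (by omega)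
  have hs₁ : sin (thetaN n / 2) ≤ cos (thetaN n) := by
    simpa using sin_thetaN_half_le_cos (n := n) (k := 1) (by omega)
  have hs₂ := sin_thetaN_half_le_cos hk
  have hsq : 1 - cos (thetaN n) = 2 * sin (thetaN n / 2) ^ 2 := by
    rw [sin_sq, cos_thetaN_half_sq]
    ring
  rw [hsq]
  nlinarith [mul_le_mul hs₁ hs₂ hs₀ (hs₀.trans hs₁)]

theorem sin_intCast_mul_thetaN_le (hodd : Odd n) (m : ℤ) :
    sin (m * thetaN n) ≤ cos (thetaN n / 2) := by
  have hn : 0 < n := hodd.pos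
  have hodd' : Odd ((n : ℤ) - 2 * m) := (hodd.natCast (R := ℤ)).sub_even ⟨m, by ring⟩
  have key := cos_odd_mul_pi_div_le (N := 2 * n) (by omega) hodd'
  have hn' : (n : ℝ) ≠ 0 := by positivity
  rw [← cos_pi_div_two_sub]
  convert key using 2 <;> (simp only [thetaN]; push_cast; field_simp)

theorem neg_cos_thetaN_half_le_sin (hodd : Odd n) (m : ℤ) :
    -cos (thetaN n / 2) ≤ sin (m * thetaN n) := by
  have := sin_intCast_mul_thetaN_le hodd (-m)
  rw [Int.cast_neg, neg_mul, sin_neg] at this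
  linarith

theorem exists_sin_mul_thetaN_eq_cos_thetaN_half (hodd : Odd n) (k : ℕ) :
    ∃ m : ℤ, Even (m + k) ∧ sin (m * thetaN n) = cos (thetaN n / 2) := by
  have hπ := natCast_mul_thetaN hodd.pos
  obtain ⟨c, hc⟩ := hodd
  rw [show (n : ℝ) = 2 * c + 1 by exact_mod_cast hc] at hπ
  by_cases hck : Even ((c : ℤ) + k)
  · refine ⟨c, hck, ?_⟩
    rw [Int.cast_natCast, show (c : ℝ) * thetaN n = π / 2 - thetaN n / 2 by linarith,
      sin_pi_div_two_sub]
  · refine ⟨c + 1, by rw [add_right_comm]; exact Int.even_add_one.2 hck, ?_⟩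
    rw [show ((c + 1 : ℤ) : ℝ) * thetaN n = thetaN n / 2 + π / 2 by push_cast; linarith,
      sin_add_pi_div_two]

theorem exists_two_mul_sub_mul_thetaN_eq (hn : 0 < n) (k : ℕ) {m : ℤ} (hm : Even (m + k)) :
    ∃ j < n, ∃ t : ℤ, ((2 * j - k : ℤ) : ℝ) * thetaN n = m * thetaN n + t * (2 * π) := by
  obtain ⟨c, hc⟩ := hm
  have hn' : (0 : ℤ) < n := by exact_mod_cast hn
  have := Int.emod_lt_of_pos c hn'
  refine ⟨(c % n).toNat, by omega, -(c / n), ?_⟩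
  have hdiv : ((c % n).toNat : ℤ) = c - n * (c / n) := by
    rw [Int.toNat_of_nonneg (Int.emod_nonneg c hn'.ne'), Int.emod_def]
  rw [← natCast_mul_thetaN hn]
  push_cast [hdiv]
  have : (m : ℝ) + k = c + c := by exact_mod_cast hc
  linear_combination (-thetaN n) * this

end Parameters

section Vertices

variable {n : ℕ}

theorem omegaN_mod (hn : 0 < n) (i : ℕ) : omegaN n (i % n) = omegaN n i := by
  have h : 2 * (i : ℝ) * thetaN n
      = 2 * ((i % n : ℕ) : ℝ) * thetaN n + ((i / n : ℕ) : ℤ) * (2 * π) := by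
    have hi : (i : ℝ) = (i % n : ℕ) + n * (i / n : ℕ) := by
      exact_mod_cast (Nat.mod_add_div i n).symm
    rw [Int.cast_natCast, hi]
    linear_combination (2 * ((i / n : ℕ) : ℝ)) * natCast_mul_thetaN hn
  simp only [omegaN, h, cos_add_int_mul_two_pi, sin_add_int_mul_two_pi]

theorem omegaN_mem_OmegaN (hn : 0 < n) (i : ℕ) : omegaN n i ∈ OmegaN n :=
  subset_convexHull ℝ _ ⟨i % n, Nat.mod_lt _ hn, (omegaN_mod hn i).symm⟩

theorem omegaN_dotProduct_omegaN (i j : ℕ) :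
    omegaN n i ⬝ᵥ omegaN n j = rN n ^ 2 * cos (2 * j * thetaN n - 2 * i * thetaN n) + 1 := by
  simp only [dotProduct, omegaN, Fin.sum_univ_three, Fin.isValue, Matrix.cons_val_zero,
    Matrix.cons_val_one, Matrix.cons_val, cos_sub]
  ring

theorem omegaN_dotProduct_omegaN_lt (hn : 2 < n) {i j : ℕ} (hi : i < n) (hj : j < n)
    (hij : j ≠ i) : omegaN n i ⬝ᵥ omegaN n j < omegaN n i ⬝ᵥ omegaN n i := by
  have hθ := natCast_mul_thetaN (n := n) (by omega)
  have hcos : cos (2 * j * thetaN n - 2 * i * thetaN n) < 1 := by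
    refine (cos_le_one _).lt_of_ne fun h => hij ?_
    have hi' : (i : ℝ) < n := by exact_mod_cast hi
    have hj' : (j : ℝ) < n := by exact_mod_cast hj
    have hpos := thetaN_pos (n := n) (by omega)
    have h0 := (cos_eq_one_iff_of_lt_of_lt (by nlinarith) (by nlinarith)).1 h
    have : (j : ℝ) = i := by
      have : ((j : ℝ) - i) * thetaN n = 0 := by linarith
      simpa [hpos.ne', sub_eq_zero] using this
    exact_mod_cast this
  have hr : 0 < rN n ^ 2 := by
    rw [rN_sq hn]
    exact inv_pos.2 (cos_thetaN_pos hn)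
  rw [omegaN_dotProduct_omegaN, omegaN_dotProduct_omegaN, sub_self, cos_zero]
  nlinarith

theorem extremePoints_OmegaN (hn : 2 < n) :
    (OmegaN n).extremePoints ℝ = {v | ∃ i < n, v = omegaN n i} := by
  refine subset_antisymm extremePoints_convexHull_subset ?_
  rintro _ ⟨i, hi, rfl⟩
  refine mem_extremePoints_convexHull_of_lt (dotProductBilin ℝ ℝ (omegaN n i))
    ⟨i, hi, rfl⟩ ?_
  rintro _ ⟨j, hj, rfl⟩ hne
  simpa using omegaN_dotProduct_omegaN_lt hn hi hj (by rintro rfl; exact hne rfl)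

theorem omegaN_injOn (hn : 2 < n) : Set.InjOn (omegaN n) (Set.Iio n) := by
  intro i hi j hj h
  by_contra hne
  have := omegaN_dotProduct_omegaN_lt hn hi hj (Ne.symm hne)
  rw [h] at this
  exact lt_irrefl _ this

theorem sum_omegaN (hn : 1 < n) : ∑ i ∈ Finset.range n, omegaN n i = (n : ℝ) • uEff := by
  have hroots := (Complex.isPrimitiveRoot_exp n (by omega)).geom_sum_eq_zero hn
  have hpow : ∀ i : ℕ, Complex.exp (2 * π * Complex.I / n) ^ i
      = Complex.exp ((2 * i * thetaN n : ℝ) * Complex.I) := fun i => by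
    rw [← Complex.exp_nat_mul, thetaN]
    push_cast
    ring_nf
  simp only [hpow] at hroots
  have hcos := congrArg Complex.re hroots
  have hsin := congrArg Complex.im hroots
  simp only [Complex.re_sum, Complex.im_sum, Complex.exp_ofReal_mul_I_re,
    Complex.exp_ofReal_mul_I_im, Complex.zero_re, Complex.zero_im] at hcos hsin
  funext c
  fin_cases c <;>
    simp [omegaN, uEff, Finset.sum_apply, ← Finset.mul_sum, hcos, hsin]

end Vertices

section Effects

variable {n : ℕ}

theorem eN_of_odd (hodd : Odd n) (i : ℕ) : eN n i = RN n • omegaN n i := by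
  rw [eN, if_neg (Nat.not_even_iff_odd.2 hodd)]
  rfl

def oppositeEdgeMidpoint (n i : ℕ) : Fin 3 → ℝ :=
  midpoint ℝ (omegaN n (i + (n - 1) / 2)) (omegaN n (i + (n - 1) / 2 + 1))

theorem oppositeEdgeMidpoint_mem_OmegaN (hn : 0 < n) (i : ℕ) :
    oppositeEdgeMidpoint n i ∈ OmegaN n :=
  (convex_convexHull ℝ _).midpoint_mem (omegaN_mem_OmegaN hn _) (omegaN_mem_OmegaN hn _)

theorem eBarN_eq_smul_oppositeEdgeMidpoint (hodd : Odd n) (hn : 2 < n) (i : ℕ) :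
    eBarN n i = (RN n * rN n ^ 2) • oppositeEdgeMidpoint n i := by
  have hR := RN_mul_one_add_rN_sq n
  have hrc := rN_sq_mul_cos_thetaN hn
  have hπ := natCast_mul_thetaN (n := n) (by omega)
  -- the edge opposite to `ω_n(i)` joins the vertices at angles `2 i θ_n + π ∓ θ_n`
  have hc : (((n - 1) / 2 : ℕ) : ℝ) = (n - 1) / 2 := by
    obtain ⟨c, rfl⟩ := hodd
    rw [show (2 * c + 1 - 1) / 2 = c by omega]
    push_cast
    ring
  have h₁ : 2 * ((i + (n - 1) / 2 : ℕ) : ℝ) * thetaN n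
      = 2 * i * thetaN n + π - thetaN n := by
    push_cast [hc]
    linear_combination hπ
  have h₂ : 2 * ((i + (n - 1) / 2 + 1 : ℕ) : ℝ) * thetaN n
      = 2 * i * thetaN n + π + thetaN n := by
    push_cast [hc]
    linear_combination hπ
  rw [oppositeEdgeMidpoint, omegaN, omegaN, h₁, h₂]
  ext c
  fin_cases c <;>
    simp only [eBarN, uEff, eN_of_odd hodd, omegaN, midpoint_eq_smul_add, invOf_eq_inv,
      Matrix.smul_cons, Matrix.smul_empty, Matrix.add_cons, Matrix.empty_add_empty,
      Matrix.head_cons, Matrix.tail_cons, Pi.sub_apply, Pi.smul_apply, Matrix.cons_val,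
      Matrix.cons_val_zero, Matrix.cons_val_one, Fin.isValue, Fin.zero_eta, Fin.mk_one,
      Fin.reduceFinMk, smul_eq_mul, cos_add, cos_sub, sin_add, sin_sub, cos_pi, sin_pi]
  · linear_combination RN n * rN n * cos (2 * i * thetaN n) * hrc
  · linear_combination RN n * rN n * sin (2 * i * thetaN n) * hrc
  · linear_combination -hR

end Effects

section Symmetry

variable {n : ℕ} {T : (Fin 3 → ℝ) →ₗ[ℝ] (Fin 3 → ℝ)}

theorem image_vertices_of_mem_GLOmega (hn : 2 < n) (hT : T ∈ GLOmega n) :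
    T '' {v | ∃ i < n, v = omegaN n i} = {v | ∃ i < n, v = omegaN n i} := by
  rw [← extremePoints_OmegaN hn]
  conv_rhs => rw [← hT.2]
  exact image_extremePoints (LinearEquiv.ofBijective T hT.1) (OmegaN n)

theorem map_uEff_of_mem_GLOmega (hn : 2 < n) (hT : T ∈ GLOmega n) : T uEff = uEff := by
  set s := (Finset.range n).image (omegaN n)
  have hs : (s : Set (Fin 3 → ℝ)) = {v | ∃ i < n, v = omegaN n i} := by
    ext
    simp [s, eq_comm]
  have himage : s.image T = s := Finset.coe_injective <| by
    rw [Finset.coe_image, hs, image_vertices_of_mem_GLOmega hn hT]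
  have hsum : ∑ v ∈ s, v = (n : ℝ) • uEff := by
    rw [Finset.sum_image (by simpa using omegaN_injOn hn), sum_omegaN (by omega)]
  have hfix : T (∑ v ∈ s, v) = ∑ v ∈ s, v := by
    rw [map_sum]
    nth_rewrite 2 [← himage]
    rw [Finset.sum_image hT.1.1.injOn]
  rw [hsum, map_smul] at hfix
  exact smul_right_injective _ (by positivity : (n : ℝ) ≠ 0) hfix

theorem exists_map_eN_eq_of_mem_GLOmega (hodd : Odd n) (hn : 2 < n) (hT : T ∈ GLOmega n)
    {i : ℕ} (hi : i < n) : ∃ i' < n, T (eN n i) = eN n i' ∧ T (eBarN n i) = eBarN n i' := by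
  obtain ⟨i', hi', h⟩ : T (omegaN n i) ∈ {v | ∃ i < n, v = omegaN n i} :=
    image_vertices_of_mem_GLOmega hn hT ▸ ⟨_, ⟨i, hi, rfl⟩, rfl⟩
  have he : T (eN n i) = eN n i' := by rw [eN_of_odd hodd, map_smul, h, eN_of_odd hodd]
  exact ⟨i', hi', he, by rw [eBarN, map_sub, map_uEff_of_mem_GLOmega hn hT, he, eBarN]⟩

end Symmetry

section VertexEnsemble

variable {n : ℕ}

def vertexCHSH (n k i j : ℕ) : ℝ :=
  4 * (dot3 (QQ n k 0 0) (eN n i) + dot3 (QQ n k 0 1) (eBarN n i)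
    + dot3 (QQ n k 1 0) (eN n j) + dot3 (QQ n k 1 1) (eBarN n j) - 1)

theorem CEns_eq_vertexCHSH (k : ℕ) {pw : (Fin 2 → Fin 2 → ℝ) × (Fin 2 → Fin 2 → Fin 3 → ℝ)}
    {i j : ℕ} (h00 : pw.1 0 0 • pw.2 0 0 = eN n i) (h01 : pw.1 0 1 • pw.2 0 1 = eBarN n i)
    (h10 : pw.1 1 0 • pw.2 1 0 = eN n j) (h11 : pw.1 1 1 • pw.2 1 1 = eBarN n j) :
    CEns n k pw = vertexCHSH n k i j := by
  have hsmul (c : ℝ) (f v : Fin 3 → ℝ) : c * dot3 f v = dot3 f (c • v) :=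
    (dotProduct_smul c f v).symm
  simp only [CEns, vertexCHSH, Fin.sum_univ_two, hsmul, h00, h01, h10, h11]
  ring

theorem vertexCHSH_eq (hodd : Odd n) (k i j : ℕ) :
    vertexCHSH n k i j = 2 - 8 * RN n ^ 2 * rN n ^ 2 + 8 * RN n ^ 2 * rN n ^ 2 *
      (cos (k * thetaN n) * cos (((2 * i - k : ℤ) : ℝ) * thetaN n)
        + sin (k * thetaN n) * sin (((2 * j - k : ℤ) : ℝ) * thetaN n)) := by
  have hk := sin_sq_add_cos_sq (k * thetaN n)
  have hR := RN_mul_one_add_rN_sq n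
  simp only [vertexCHSH, QQ, eBarN, eN_of_odd hodd, omegaN, uEff, dot3, Fin.sum_univ_three,
    Matrix.smul_cons, Matrix.smul_empty, Matrix.add_cons, Matrix.sub_cons,
    Matrix.empty_add_empty, Matrix.head_cons, Matrix.tail_cons, Matrix.cons_val',
    Matrix.cons_val_zero, Matrix.cons_val_one, Matrix.cons_val, Matrix.cons_val_fin_one,
    Pi.smul_apply, Pi.sub_apply, smul_eq_mul, Fin.isValue, CharP.cast_eq_zero, mul_zero, zero_mul,
    cos_zero, sin_zero, Int.cast_sub, Int.cast_mul, Int.cast_ofNat, Int.cast_natCast, sub_mul,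
    cos_sub, sin_sub, show 2 * (k : ℝ) * thetaN n = 2 * (k * thetaN n) by ring, cos_two_mul',
    sin_two_mul]
  linear_combination (4 * RN n ^ 2 * rN n ^ 2 * (cos (2 * j * thetaN n)
    - cos (2 * i * thetaN n))) * hk + 8 * RN n * hR

def vertexEnsemble (n i j : ℕ) : (Fin 2 → Fin 2 → ℝ) × (Fin 2 → Fin 2 → Fin 3 → ℝ) :=
  (![![RN n, RN n * rN n ^ 2], ![RN n, RN n * rN n ^ 2]],
    ![![omegaN n i, oppositeEdgeMidpoint n i], ![omegaN n j, oppositeEdgeMidpoint n j]])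

theorem vertexEnsemble_mem_EnsME (hodd : Odd n) (hn : 2 < n) {i j : ℕ} (hi : i < n)
    (hj : j < n) : vertexEnsemble n i j ∈ EnsME n := by
  have he := eN_of_odd hodd
  have heb := eBarN_eq_smul_oppositeEdgeMidpoint hodd hn
  have hR := RN_mul_one_add_rN_sq n
  have hR0 : 0 ≤ RN n := by rw [RN]; positivity
  refine ⟨⟨fun s a => ?_, fun s => ?_, fun s a => ?_, ?_⟩, LinearMap.id,
    ⟨Function.bijective_id, Set.image_id _⟩, i, hi, j, hj, ?_⟩
  · fin_cases s <;> fin_cases a <;> simp [vertexEnsemble] <;> positivity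
  · fin_cases s <;> simp [vertexEnsemble] <;> linear_combination hR
  · fin_cases s <;> fin_cases a <;>
      simp [vertexEnsemble, omegaN_mem_OmegaN, oppositeEdgeMidpoint_mem_OmegaN, hodd.pos]
  · simp [vertexEnsemble, ← he, ← heb, eBarN]
  · simp [vertexEnsemble, ← he, ← heb]

theorem CEns_vertexEnsemble (hodd : Odd n) (hn : 2 < n) (k i j : ℕ) :
    CEns n k (vertexEnsemble n i j) = vertexCHSH n k i j :=
  CEns_eq_vertexCHSH k (eN_of_odd hodd i).symm
    (eBarN_eq_smul_oppositeEdgeMidpoint hodd hn i).symm (eN_of_odd hodd j).symm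
    (eBarN_eq_smul_oppositeEdgeMidpoint hodd hn j).symm

theorem Hfun_eq_sSup_vertexCHSH (hodd : Odd n) (hn : 2 < n) (k : ℕ) :
    Hfun n k = sSup {x | ∃ i < n, ∃ j < n, |vertexCHSH n k i j| = x} := by
  rw [Hfun]
  congr 1
  ext x
  constructor
  · rintro ⟨pw, ⟨-, η, hη, i, hi, j, hj, h00, h01, h10, h11⟩, rfl⟩
    obtain ⟨i', hi', hei, hebi⟩ := exists_map_eN_eq_of_mem_GLOmega hodd hn hη hi
    obtain ⟨j', hj', hej, hebj⟩ := exists_map_eN_eq_of_mem_GLOmega hodd hn hη hj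
    exact ⟨i', hi', j', hj', congrArg abs (CEns_eq_vertexCHSH k (h00.symm.trans hei)
      (h01.symm.trans hebi) (h10.symm.trans hej) (h11.symm.trans hebj)).symm⟩
  · rintro ⟨i, hi, j, hj, rfl⟩
    exact ⟨_, vertexEnsemble_mem_EnsME hodd hn hi hj,
      congrArg abs (CEns_vertexEnsemble hodd hn k i j)⟩

end VertexEnsemble

section Optimum

variable {n k : ℕ}

theorem abs_vertexCHSH_le (hodd : Odd n) (hn : 2 < n) (hk : 2 * k + 1 ≤ n) (i j : ℕ) :
    |vertexCHSH n k i j| ≤ 2 - 8 * RN n ^ 2 * rN n ^ 2 + 8 * RN n ^ 2 * rN n ^ 2 *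
      (cos (k * thetaN n) + cos (thetaN n / 2) * sin (k * thetaN n)) := by
  have hc := eight_mul_RN_sq_mul_rN_sq hn
  have ht := cos_thetaN_pos hn
  rw [vertexCHSH_eq hodd]
  set c := 8 * RN n ^ 2 * rN n ^ 2
  have hc₀ : 0 ≤ c := by positivity
  have hc₂ : c ≤ 2 := by
    rw [hc, div_le_iff₀ (by positivity)]
    nlinarith [sq_nonneg (1 - cos (thetaN n))]
  have hck := cos_natCast_mul_thetaN_nonneg hk
  have hsk := sin_natCast_mul_thetaN_nonneg (n := n) (k := k) (by omega)
  have hx₁ := neg_one_le_cos (((2 * i - k : ℤ) : ℝ) * thetaN n)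
  have hx₂ := cos_le_one (((2 * i - k : ℤ) : ℝ) * thetaN n)
  have hy₁ := neg_cos_thetaN_half_le_sin hodd (2 * j - k)
  have hy₂ := sin_intCast_mul_thetaN_le hodd (2 * j - k)
  rw [abs_le]
  constructor
  · nlinarith [mul_nonneg (mul_nonneg hc₀ hck) (neg_le_iff_add_nonneg.1 hx₁),
      mul_nonneg (mul_nonneg hc₀ hsk) (neg_le_iff_add_nonneg'.1 hy₁)]
  · nlinarith [mul_nonneg (mul_nonneg hc₀ hck) (sub_nonneg.2 hx₂),
      mul_nonneg (mul_nonneg hc₀ hsk) (sub_nonneg.2 hy₂)]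

theorem abs_vertexCHSH_le_of_odd (hodd : Odd n) (hn : 2 < n) (hk : 2 * k + 1 ≤ n) (hko : Odd k)
    (i j : ℕ) :
    |vertexCHSH n k i j| ≤ 8 * RN n ^ 2 * rN n ^ 2 - 2 + 8 * RN n ^ 2 * rN n ^ 2 *
      (cos (k * thetaN n) + cos (thetaN n / 2) * sin (k * thetaN n)) := by
  have hc := eight_mul_RN_sq_mul_rN_sq hn
  have ht := cos_thetaN_pos hn
  rw [vertexCHSH_eq hodd]
  set c := 8 * RN n ^ 2 * rN n ^ 2
  have hc₀ : 0 ≤ c := by positivity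
  have hck := cos_natCast_mul_thetaN_nonneg hk
  have hsk := sin_natCast_mul_thetaN_nonneg (n := n) (k := k) (by omega)
  have hx₁ := neg_one_le_cos (((2 * i - k : ℤ) : ℝ) * thetaN n)
  have hx₂ : cos (((2 * i - k : ℤ) : ℝ) * thetaN n) ≤ cos (thetaN n) :=
    cos_odd_mul_pi_div_le hodd.pos (Even.sub_odd (even_two_mul _) (hko.natCast))
  have hy₁ := neg_cos_thetaN_half_le_sin hodd (2 * j - k)
  have hy₂ := sin_intCast_mul_thetaN_le hodd (2 * j - k)
  have hslack : 4 - 2 * c ≤ c * cos (k * thetaN n) * (1 - cos (thetaN n)) := by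
    have hkey := one_sub_cos_thetaN_le hn hk
    have hdiff : c * cos (k * thetaN n) * (1 - cos (thetaN n)) - (4 - 2 * c)
        = 4 * (1 - cos (thetaN n)) * (2 * cos (thetaN n) * cos (k * thetaN n)
          - (1 - cos (thetaN n))) / (1 + cos (thetaN n)) ^ 2 := by
      rw [hc]
      field_simp
      ring
    rw [← sub_nonneg, hdiff]
    exact div_nonneg (mul_nonneg (mul_nonneg (by norm_num) (sub_nonneg.2 (cos_le_one _)))
      (sub_nonneg.2 hkey)) (sq_nonneg _)
  rw [abs_le]
  constructor
  · nlinarith [mul_nonneg (mul_nonneg hc₀ hck) (neg_le_iff_add_nonneg.1 hx₁),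
      mul_nonneg (mul_nonneg hc₀ hsk) (neg_le_iff_add_nonneg'.1 hy₁)]
  · nlinarith [mul_nonneg (mul_nonneg hc₀ hck) (sub_nonneg.2 hx₂),
      mul_nonneg (mul_nonneg hc₀ hsk) (sub_nonneg.2 hy₂)]

theorem exists_vertexCHSH_eq_of_even (hodd : Odd n) (hke : Even k) :
    ∃ i < n, ∃ j < n, vertexCHSH n k i j = 2 - 8 * RN n ^ 2 * rN n ^ 2 +
      8 * RN n ^ 2 * rN n ^ 2 * (cos (k * thetaN n) + cos (thetaN n / 2) * sin (k * thetaN n)) := by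
  obtain ⟨i, hi, s, hs⟩ :=
    exists_two_mul_sub_mul_thetaN_eq hodd.pos k (m := 0) (by simpa using hke)
  obtain ⟨m, hm, hsin⟩ := exists_sin_mul_thetaN_eq_cos_thetaN_half hodd k
  obtain ⟨j, hj, t, ht⟩ := exists_two_mul_sub_mul_thetaN_eq hodd.pos k hm
  refine ⟨i, hi, j, hj, ?_⟩
  rw [vertexCHSH_eq hodd, hs, ht, cos_add_int_mul_two_pi, sin_add_int_mul_two_pi, hsin]
  simp only [Int.cast_zero, zero_mul, cos_zero]
  ring

theorem exists_vertexCHSH_eq_of_odd (hodd : Odd n) (hko : Odd k) :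
    ∃ i < n, ∃ j < n, vertexCHSH n k i j = -(8 * RN n ^ 2 * rN n ^ 2 - 2 + 8 * RN n ^ 2 *
      rN n ^ 2 * (cos (k * thetaN n) + cos (thetaN n / 2) * sin (k * thetaN n))) := by
  obtain ⟨i, hi, s, hs⟩ := exists_two_mul_sub_mul_thetaN_eq hodd.pos k (m := n)
    (hodd.natCast.add_odd hko.natCast)
  obtain ⟨m, hm, hsin⟩ := exists_sin_mul_thetaN_eq_cos_thetaN_half hodd k
  obtain ⟨j, hj, t, ht⟩ := exists_two_mul_sub_mul_thetaN_eq hodd.pos k (m := -m)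
    (by simpa [show m + k - 2 * m = -m + k by ring] using hm.sub (even_two_mul m))
  refine ⟨i, hi, j, hj, ?_⟩
  rw [vertexCHSH_eq hodd, hs, ht, cos_add_int_mul_two_pi, sin_add_int_mul_two_pi, Int.cast_neg,
    neg_mul, sin_neg, hsin, Int.cast_natCast, natCast_mul_thetaN hodd.pos, cos_pi]
  ring

theorem Hfun_eq_of_abs_vertexCHSH_le (hodd : Odd n) (hn : 2 < n) {V : ℝ}
    (hle : ∀ i j, |vertexCHSH n k i j| ≤ V) (hV : ∃ i < n, ∃ j < n, V ≤ |vertexCHSH n k i j|) :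
    Hfun n k = V := by
  obtain ⟨i, hi, j, hj, hij⟩ := hV
  rw [Hfun_eq_sSup_vertexCHSH hodd hn]
  exact IsGreatest.csSup_eq ⟨⟨i, hi, j, hj, (hle i j).antisymm hij⟩,
    by rintro _ ⟨i, -, j, -, rfl⟩; exact hle i j⟩

end Optimum

/-- closed-form expressions for `H_n(k)`. -/
theorem Hfun_formula (n : ℕ) (hodd : Odd n) (hn : 3 < n) (k : ℕ) (hk : k ≤ (n - 1) / 2) :
    (Even k → Hfun n k =
      4 * (RN n / Real.cos (thetaN n / 2) ^ 2 * Real.cos ((k : ℝ) * thetaN n)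
        + RN n / Real.cos (thetaN n / 2) * Real.sin ((k : ℝ) * thetaN n)
        + RN n ^ 2 * (1 + rN n ^ 4)) - 2) ∧
    (Odd k → Hfun n k =
      4 * (RN n / Real.cos (thetaN n / 2) ^ 2 * Real.cos ((k : ℝ) * thetaN n)
        + RN n / Real.cos (thetaN n / 2) * Real.sin ((k : ℝ) * thetaN n)
        + 2 * RN n ^ 2 * rN n ^ 2) - 2) := by
  have hn₂ : 2 < n := by omega
  have hk₂ : 2 * k + 1 ≤ n := by omega
  rw [RN_div_cos_thetaN_half_sq hn₂, RN_div_cos_thetaN_half hn₂]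
  refine ⟨fun hke => ?_, fun hko => ?_⟩
  · obtain ⟨i, hi, j, hj, hij⟩ := exists_vertexCHSH_eq_of_even hodd hke
    rw [Hfun_eq_of_abs_vertexCHSH_le hodd hn₂ (abs_vertexCHSH_le hodd hn₂ hk₂)
      ⟨i, hi, j, hj, hij ▸ le_abs_self _⟩]
    linear_combination (-4 * (RN n * (1 + rN n ^ 2) + 1)) * RN_mul_one_add_rN_sq n
  · obtain ⟨i, hi, j, hj, hij⟩ := exists_vertexCHSH_eq_of_odd hodd hko
    rw [Hfun_eq_of_abs_vertexCHSH_le hodd hn₂ (abs_vertexCHSH_le_of_odd hodd hn₂ hk₂ hko)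
      ⟨i, hi, j, hj, by rw [hij, abs_neg]; exact le_abs_self _⟩]
    ring
end
end

section
/- Let n ≥ 5 be odd, θ = π/n, and let k be an integer with 0 ≤ k ≤ (n−1)/2. Then √2 cos(θ/2) sin(kθ + π/4) < cos(kθ) + cos(θ/2) sin(kθ) ≤ √2 sin(kθ + π/4), and the right-hand inequality is strict whenever k ≥ 1 (with equality exactly when k = 0). -/
/-- for odd `n ≥ 5`, `θ = π/n` and `0 ≤ k ≤ (n−1)/2`,
`√2 cos(θ/2) sin(kθ + π/4) < cos(kθ) + cos(θ/2) sin(kθ) ≤ √2 sin(kθ + π/4)`,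
with equality on the right exactly when `k = 0`. -/
theorem trig_sandwich (n : ℕ) (hodd : Odd n) (hn : 5 ≤ n) (k : ℕ) (hk : k ≤ (n - 1) / 2) :
    Real.sqrt 2 * Real.cos (Real.pi / n / 2)
        * Real.sin ((k : ℝ) * (Real.pi / n) + Real.pi / 4)
      < Real.cos ((k : ℝ) * (Real.pi / n))
        + Real.cos (Real.pi / n / 2) * Real.sin ((k : ℝ) * (Real.pi / n)) ∧
    Real.cos ((k : ℝ) * (Real.pi / n))
        + Real.cos (Real.pi / n / 2) * Real.sin ((k : ℝ) * (Real.pi / n))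
      ≤ Real.sqrt 2 * Real.sin ((k : ℝ) * (Real.pi / n) + Real.pi / 4) ∧
    (Real.cos ((k : ℝ) * (Real.pi / n))
        + Real.cos (Real.pi / n / 2) * Real.sin ((k : ℝ) * (Real.pi / n))
      = Real.sqrt 2 * Real.sin ((k : ℝ) * (Real.pi / n) + Real.pi / 4) ↔ k = 0) := by
  obtain ⟨m, hm⟩ := hodd
  have hk' : k ≤ m := by omega
  have hπ := Real.pi_pos
  have hn0 : (0:ℝ) < n := by positivity
  set θ : ℝ := Real.pi / n with hθ
  have hθ0 : 0 < θ := by positivity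
  set x : ℝ := (k : ℝ) * θ with hxdef
  have hx0 : 0 ≤ x := by positivity
  have hxlt : x < Real.pi / 2 := by
    have hkm : (k : ℝ) ≤ m := by exact_mod_cast hk'
    have h1 : x ≤ (m : ℝ) * θ := mul_le_mul_of_nonneg_right hkm hθ0.le
    have hmn : (2 * m : ℝ) < n := by exact_mod_cast (by omega : 2 * m < n)
    have h2 : (m : ℝ) * θ < Real.pi / 2 := by
      rw [hθ, mul_div_assoc', div_lt_div_iff₀ hn0 two_pos]
      nlinarith
    linarith
  have hcosx : 0 < Real.cos x :=
    Real.cos_pos_of_mem_Ioo ⟨by linarith, hxlt⟩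
  have hsinx : 0 ≤ Real.sin x :=
    Real.sin_nonneg_of_nonneg_of_le_pi hx0 (by linarith)
  have hθπ : θ < Real.pi := by
    rw [hθ]; exact div_lt_self hπ (by exact_mod_cast (by omega : 1 < n))
  have hc0 : 0 < Real.cos (θ / 2) :=
    Real.cos_pos_of_mem_Ioo ⟨by linarith, by linarith⟩
  have hc1 : Real.cos (θ / 2) < 1 := by
    have hs : 0 < Real.sin (θ / 2) :=
      Real.sin_pos_of_pos_of_lt_pi (by positivity) (by linarith)
    nlinarith [Real.sin_sq_add_cos_sq (θ / 2)]
  -- key identity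
  have hid : Real.sqrt 2 * Real.sin (x + Real.pi / 4) = Real.cos x + Real.sin x := by
    rw [Real.sin_add, Real.sin_pi_div_four, Real.cos_pi_div_four]
    have h2 : Real.sqrt 2 * Real.sqrt 2 = 2 := Real.mul_self_sqrt (by norm_num)
    nlinarith
  have hsinkey : Real.sin x = 0 ↔ k = 0 := by
    constructor
    · intro h
      by_contra hk0
      have hkpos : 0 < (k : ℝ) := by exact_mod_cast Nat.pos_of_ne_zero hk0
      have : 0 < Real.sin x :=
        Real.sin_pos_of_pos_of_lt_pi (by positivity) (by linarith)
      linarith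
    · intro h; simp [hxdef, h]
  refine ⟨?_, ?_, ?_⟩
  · have : Real.sqrt 2 * Real.cos (θ / 2) * Real.sin (x + Real.pi / 4)
        = Real.cos (θ / 2) * (Real.cos x + Real.sin x) := by
      rw [← hid]; ring
    rw [this]
    nlinarith
  · rw [hid]; nlinarith
  · rw [hid]
    constructor
    · intro h
      rw [← hsinkey]
      nlinarith
    · intro h
      have : Real.sin x = 0 := hsinkey.mpr h
      rw [this]; ring
end

section
/- Let n ≥ 5 be odd, θ = π/n, and r = (cos θ)^{-1/2}. Then tan(π/4 − θ/4) < (1 − r² sin²(θ/2)) / (r² sin²(θ/2) + cos(θ/2)) < 1. -/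
/-!
With `x = θ/2`, `σ = sin x`, `γ = cos x` we have `cos θ = 1 - 2σ²` and
`tan(π/4 - θ/4) = γ / (1 + σ)`, so after clearing denominators both inequalities are
polynomial in `σ, γ` subject to `σ² + γ² = 1`. The upper bound reduces to
`1 - γ ≤ σ² < 2σ² / cos θ`; the lower one to `σ (1 + σ + γ) < (1 + σ)(1 - 2σ²)`,
which holds once `σ ≤ 1/3`, i.e. for `θ ≤ 2/3`, which covers `θ ≤ π/5`.
-/

open Real

namespace Real

theorem tan_eq_sin_two_mul_div_one_add_cos_two_mul (y : ℝ) :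
    tan y = sin (2 * y) / (1 + cos (2 * y)) := by
  rw [tan_eq_sin_div_cos, sin_two_mul, cos_two_mul]
  rcases eq_or_ne (cos y) 0 with hcos | hcos
  · simp [hcos]
  · field_simp
    ring

theorem tan_pi_div_four_sub_div_four (θ : ℝ) :
    tan (π / 4 - θ / 4) = cos (θ / 2) / (1 + sin (θ / 2)) := by
  rw [tan_eq_sin_two_mul_div_one_add_cos_two_mul, ← sin_pi_div_two_sub, ← cos_pi_div_two_sub]
  ring_nf

end Real

section SinCos

variable {σ γ c : ℝ}

theorem div_one_add_lt_of_sin_cos (hσ0 : 0 < σ) (hσ : σ ≤ 1 / 3) (hγ0 : 0 ≤ γ)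
    (hpyth : σ ^ 2 + γ ^ 2 = 1) (hc : c = 1 - 2 * σ ^ 2) :
    γ / (1 + σ) < (1 - c⁻¹ * σ ^ 2) / (c⁻¹ * σ ^ 2 + γ) := by
  have hc0 : 0 < c := by nlinarith
  set s := c⁻¹ * σ ^ 2 with hs
  have hsc : s * c = σ ^ 2 := by rw [hs]; field_simp
  have hγ1 : γ ≤ 1 := by nlinarith
  have hσc : σ * (1 + σ + γ) < (1 + σ) * c := by rw [hc]; nlinarith [mul_pos hσ0 hσ0]
  have hs_lt : s * (1 + σ + γ) < σ * (1 + σ) := by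
    refine lt_of_mul_lt_mul_right ?_ hc0.le
    nlinarith
  rw [div_lt_div_iff₀ (by linarith) (by positivity)]
  nlinarith

theorem div_lt_one_of_sin_cos (hσ : σ ≠ 0) (hγ0 : 0 ≤ γ) (hpyth : σ ^ 2 + γ ^ 2 = 1)
    (hc0 : 0 < c) (hc1 : c ≤ 1) :
    (1 - c⁻¹ * σ ^ 2) / (c⁻¹ * σ ^ 2 + γ) < 1 := by
  have hσ2 : 0 < σ ^ 2 := by positivity
  have hsσ : σ ^ 2 ≤ c⁻¹ * σ ^ 2 := le_mul_of_one_le_left hσ2.le ((one_le_inv₀ hc0).mpr hc1)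
  have hγσ : 1 - γ ≤ σ ^ 2 := by nlinarith
  rw [div_lt_one (by positivity)]
  linarith

end SinCos

section HalfAngle

variable {θ : ℝ}

theorem tan_pi_div_four_sub_div_four_lt (hθ0 : 0 < θ) (hθ : θ ≤ 2 / 3) :
    tan (π / 4 - θ / 4) <
      (1 - (cos θ)⁻¹ * sin (θ / 2) ^ 2) / ((cos θ)⁻¹ * sin (θ / 2) ^ 2 + cos (θ / 2)) := by
  have hpi := pi_gt_three
  rw [tan_pi_div_four_sub_div_four]
  refine div_one_add_lt_of_sin_cos (sin_pos_of_pos_of_lt_pi (by linarith) (by linarith))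
    ((sin_le (by linarith)).trans (by linarith))
    (cos_nonneg_of_neg_pi_div_two_le_of_le (by linarith) (by linarith))
    (sin_sq_add_cos_sq _) ?_
  rw [← cos_two_mul_eq_one_sub]
  ring_nf

theorem one_sub_inv_cos_mul_sin_half_sq_div_lt_one (hθ0 : 0 < θ) (hθ : θ < π / 2) :
    (1 - (cos θ)⁻¹ * sin (θ / 2) ^ 2) / ((cos θ)⁻¹ * sin (θ / 2) ^ 2 + cos (θ / 2)) < 1 :=
  div_lt_one_of_sin_cos (sin_pos_of_pos_of_lt_pi (by linarith) (by linarith)).ne'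
    (cos_nonneg_of_neg_pi_div_two_le_of_le (by linarith) (by linarith)) (sin_sq_add_cos_sq _)
    (cos_pos_of_mem_Ioo ⟨by linarith, hθ⟩) (cos_le_one θ)

end HalfAngle

theorem trig_tan_bound_general (n : ℕ) (hn : 5 ≤ n) :
    Real.tan (Real.pi / 4 - Real.pi / n / 4)
      < (1 - (Real.sqrt (Real.cos (Real.pi / n))⁻¹) ^ 2 * Real.sin (Real.pi / n / 2) ^ 2)
        / ((Real.sqrt (Real.cos (Real.pi / n))⁻¹) ^ 2 * Real.sin (Real.pi / n / 2) ^ 2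
          + Real.cos (Real.pi / n / 2)) ∧
    (1 - (Real.sqrt (Real.cos (Real.pi / n))⁻¹) ^ 2 * Real.sin (Real.pi / n / 2) ^ 2)
        / ((Real.sqrt (Real.cos (Real.pi / n))⁻¹) ^ 2 * Real.sin (Real.pi / n / 2) ^ 2
          + Real.cos (Real.pi / n / 2)) < 1 := by
  have hθ0 : 0 < π / n := by positivity
  have hθ : π / n ≤ π / 5 :=
    div_le_div_of_nonneg_left pi_pos.le (by norm_num) (by exact_mod_cast hn)
  have hcos : 0 < cos (π / n) := cos_pos_of_mem_Ioo ⟨by linarith, by linarith [pi_pos]⟩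
  rw [sq_sqrt (inv_nonneg.mpr hcos.le)]
  exact ⟨tan_pi_div_four_sub_div_four_lt hθ0 (by linarith [pi_lt_d2]),
    one_sub_inv_cos_mul_sin_half_sq_div_lt_one hθ0 (by linarith [pi_pos])⟩

/-- for odd `n ≥ 5`, `θ = π/n` and `r = (cos θ)^{-1/2}`,
`tan(π/4 − θ/4) < (1 − r² sin²(θ/2)) / (r² sin²(θ/2) + cos(θ/2)) < 1`. -/
theorem trig_tan_bound (n : ℕ) (hodd : Odd n) (hn : 5 ≤ n) :
    Real.tan (Real.pi / 4 - Real.pi / n / 4)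
      < (1 - (Real.sqrt (Real.cos (Real.pi / n))⁻¹) ^ 2 * Real.sin (Real.pi / n / 2) ^ 2)
        / ((Real.sqrt (Real.cos (Real.pi / n))⁻¹) ^ 2 * Real.sin (Real.pi / n / 2) ^ 2
          + Real.cos (Real.pi / n / 2)) ∧
    (1 - (Real.sqrt (Real.cos (Real.pi / n))⁻¹) ^ 2 * Real.sin (Real.pi / n / 2) ^ 2)
        / ((Real.sqrt (Real.cos (Real.pi / n))⁻¹) ^ 2 * Real.sin (Real.pi / n / 2) ^ 2
          + Real.cos (Real.pi / n / 2)) < 1 :=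
  trig_tan_bound_general n hn
end
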